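/- arXiv:1505.01939 — 11 statements merged into one kernel-verified Lean document; each statement's English description precedes it below -/
import Mathlib

section
/- Let A be a unital complex star-algebra. If x, y ∈ A ⊗[ℂ] Aᵐᵒᵖ are both real (τ(x) = x, τ(y) = y) and normalized (m(x) = 1, m(y) = 1), then their product x·y is again real and normalized. Hence the set Pert(A) of real normalized elements of A ⊗ Aᵐᵒᵖ is a sub-semigroup (the perturbation semigroup). -/
open TensorProduct MulOpposite

/-- Let `A` be a unital complex star-algebra, let `τ` be the conjugate-linear map on
`A ⊗[ℂ] Aᵐᵒᵖ` determined by `τ(a ⊗ op b) = b* ⊗ op (a*)`, and let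
`m : A ⊗ Aᵐᵒᵖ → A` be the linear map determined by `m(a ⊗ op b) = a·b`.
If `x, y ∈ A ⊗[ℂ] Aᵐᵒᵖ` are both real (`τ x = x`, `τ y = y`) and normalized
(`m x = 1`, `m y = 1`), then `x·y` is again real and normalized.  Hence the set
of real normalized elements (the perturbation semigroup `Pert(A)`) is a
sub-semigroup of `A ⊗ Aᵐᵒᵖ`. -/
theorem perturbation_semigroup_mul_closed
    {A : Type*} [Ring A] [Algebra ℂ A] [StarRing A] [StarModule ℂ A]
    (τ : (A ⊗[ℂ] Aᵐᵒᵖ) →ₗ⋆[ℂ] (A ⊗[ℂ] Aᵐᵒᵖ))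
    (hτ : ∀ a b : A, τ (a ⊗ₜ[ℂ] op b) = star b ⊗ₜ[ℂ] op (star a))
    (m : (A ⊗[ℂ] Aᵐᵒᵖ) →ₗ[ℂ] A)
    (hm : ∀ a b : A, m (a ⊗ₜ[ℂ] op b) = a * b) :
    ∀ x y : A ⊗[ℂ] Aᵐᵒᵖ,
      τ x = x → τ y = y → m x = 1 → m y = 1 →
        τ (x * y) = x * y ∧ m (x * y) = 1 := by
  have hτ' : ∀ (a : A) (b : Aᵐᵒᵖ), τ (a ⊗ₜ[ℂ] b) = star (unop b) ⊗ₜ[ℂ] op (star a) := by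
    intro a b
    simpa using hτ a (unop b)
  have hm' : ∀ (a : A) (b : Aᵐᵒᵖ), m (a ⊗ₜ[ℂ] b) = a * unop b := by
    intro a b
    simpa using hm a (unop b)
  have hτmul : ∀ x y : A ⊗[ℂ] Aᵐᵒᵖ, τ (x * y) = τ x * τ y := by
    intro x y
    induction x using TensorProduct.induction_on with
    | zero => simp
    | tmul a b =>
      induction y using TensorProduct.induction_on with
      | zero => simp
      | tmul c d =>
        simp only [Algebra.TensorProduct.tmul_mul_tmul, hτ', unop_mul, star_mul,
          op_mul, op_unop, unop_op]
      | add y₁ y₂ h1 h2 =>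
        simp only [mul_add, map_add, h1, h2]
    | add x₁ x₂ h1 h2 =>
      simp only [add_mul, map_add, h1, h2]
  have hmmul : ∀ x y : A ⊗[ℂ] Aᵐᵒᵖ, m y = 1 → m (x * y) = m x := by
    intro x y hy
    have key : ∀ x : A ⊗[ℂ] Aᵐᵒᵖ, ∀ (a : A) (b : Aᵐᵒᵖ),
        m ((a ⊗ₜ[ℂ] b) * x) = a * m x * unop b := by
      intro x a b
      induction x using TensorProduct.induction_on with
      | zero => simp
      | tmul c d =>
        simp only [Algebra.TensorProduct.tmul_mul_tmul, hm', unop_mul]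
        noncomm_ring
      | add x₁ x₂ h1 h2 =>
        simp only [mul_add, map_add, h1, h2]
        noncomm_ring
    induction x using TensorProduct.induction_on with
    | zero => simp
    | tmul a b => rw [key y a b, hy, mul_one, hm']
    | add x₁ x₂ h1 h2 =>
      simp only [add_mul, map_add, h1, h2]
  intro x y hx hy hmx hmy
  refine ⟨?_, ?_⟩
  · rw [hτmul, hx, hy]
  · rw [hmmul x y hmy, hmx]
end

section
/- In the gauge setup, if the family A = ((a_j, b_j))_{j ∈ s} is normalized, then the fluctuated operator has the sandwich form D_A = Σ_{j,k ∈ s} π(a_j) π'(op(a_k*)) · D · π(b_j) π'(op(b_k*)). -/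
open MulOpposite

variable {A : Type*} [Ring A] [Algebra ℂ A] [StarRing A]
variable {H : Type*} [NormedAddCommGroup H] [InnerProductSpace ℂ H] [CompleteSpace H]

/-- The inner perturbation `η_D(A)` associated to a finite family `A = ((aⱼ, bⱼ))ⱼ`. -/
noncomputable def eta (π : A →⋆ₐ[ℂ] (H →L[ℂ] H)) (π' : Aᵐᵒᵖ →⋆ₐ[ℂ] (H →L[ℂ] H))
    (D : H →L[ℂ] H) {ι : Type*} [Fintype ι] (a b : ι → A) : H →L[ℂ] H :=
  ∑ j : ι, ∑ k : ι,
    π (a j) * π' (op (star (a k))) *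
      (D * (π (b j) * π' (op (star (b k)))) - π (b j) * π' (op (star (b k))) * D)

/-- The fluctuated operator `D_A = D + η_D(A)`. -/
noncomputable def fluct (π : A →⋆ₐ[ℂ] (H →L[ℂ] H)) (π' : Aᵐᵒᵖ →⋆ₐ[ℂ] (H →L[ℂ] H))
    (D : H →L[ℂ] H) {ι : Type*} [Fintype ι] (a b : ι → A) : H →L[ℂ] H :=
  D + eta π π' D a b

/-- In the gauge setup (commuting star-representations `π` of `A` and `π'` of `Aᵐᵒᵖ` on a
complex Hilbert space `H`), if the family `A = ((aⱼ, bⱼ))ⱼ` is normalized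
(`∑ⱼ aⱼ bⱼ = 1`), then the fluctuated operator has the sandwich form
`D_A = ∑_{j,k} π(aⱼ) π'(op aₖ*) · D · π(bⱼ) π'(op bₖ*)`. -/
theorem fluct_eq_sandwich
    (π : A →⋆ₐ[ℂ] (H →L[ℂ] H)) (π' : Aᵐᵒᵖ →⋆ₐ[ℂ] (H →L[ℂ] H))
    (hcomm : ∀ (x : A) (β : Aᵐᵒᵖ), π x * π' β = π' β * π x)
    (D : H →L[ℂ] H) {ι : Type*} [Fintype ι] (a b : ι → A)
    (hnorm : ∑ j : ι, a j * b j = 1) :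
    fluct π π' D a b =
      ∑ j : ι, ∑ k : ι,
        π (a j) * π' (op (star (a k))) * D * (π (b j) * π' (op (star (b k)))) := by
  have h1 : ∀ j k : ι, π (a j) * π' (op (star (a k))) * (π (b j) * π' (op (star (b k)))) =
      π (a j * b j) * π' (op (star (a k * b k))) := by
    intro j k
    simp only [map_mul, star_mul, op_mul]
    rw [mul_assoc, ← mul_assoc (π' (op (star (a k)))), ← hcomm (b j) (op (star (a k)))]
    noncomm_ring
  have key : (∑ j : ι, ∑ k : ι,
      π (a j) * π' (op (star (a k))) * (π (b j) * π' (op (star (b k))))) = 1 := by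
    calc (∑ j : ι, ∑ k : ι,
        π (a j) * π' (op (star (a k))) * (π (b j) * π' (op (star (b k)))))
        = ∑ j : ι, ∑ k : ι, π (a j * b j) * π' (op (star (a k * b k))) := by
          refine Finset.sum_congr rfl fun j _ => Finset.sum_congr rfl fun k _ => h1 j k
      _ = (∑ j : ι, π (a j * b j)) * (∑ k : ι, π' (op (star (a k * b k)))) := by
          rw [Finset.sum_mul_sum]
      _ = 1 := by
          rw [← map_sum, hnorm, map_one, one_mul, ← map_sum]
          have hs : (∑ x : ι, op (star (a x * b x))) = op (star (∑ x : ι, a x * b x)) := by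
            rw [star_sum]
            exact_mod_cast (map_sum (opAddEquiv : A ≃+ Aᵐᵒᵖ) (fun x => star (a x * b x))
              Finset.univ).symm
          rw [hs, hnorm, star_one, op_one, map_one]
  have hQD : (∑ j : ι, ∑ k : ι,
      π (a j) * π' (op (star (a k))) * (π (b j) * π' (op (star (b k)))) * D) = D := by
    rw [show (∑ j : ι, ∑ k : ι,
      π (a j) * π' (op (star (a k))) * (π (b j) * π' (op (star (b k)))) * D)
      = (∑ j : ι, ∑ k : ι,
        π (a j) * π' (op (star (a k))) * (π (b j) * π' (op (star (b k))))) * D from by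
        simp [Finset.sum_mul], key, one_mul]
  simp only [fluct, eta, mul_sub, Finset.sum_sub_distrib]
  rw [show (∑ j : ι, ∑ k : ι, π (a j) * π' (op (star (a k))) *
      (π (b j) * π' (op (star (b k))) * D))
    = (∑ j : ι, ∑ k : ι, π (a j) * π' (op (star (a k))) *
      (π (b j) * π' (op (star (b k)))) * D) from by simp [mul_assoc], hQD]
  rw [add_sub_cancel]
  simp [mul_assoc]
end

section
/- In the gauge setup, a fluctuation of a fluctuated operator is again a fluctuated operator: if A = ((a_j, b_j))_{j ∈ s} and A' = ((a'_i, b'_i))_{i ∈ t} are both normalized families, then (D_A)_{A'} = D_{A'A}, where A'A is the normalized family indexed by t × s with entries (A'A)_{(i,j)} = (a'_i · a_j, b_j · b'_i). -/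
open MulOpposite

variable {A : Type*} [Ring A] [Algebra ℂ A] [StarRing A]
variable {H : Type*} [NormedAddCommGroup H] [InnerProductSpace ℂ H] [CompleteSpace H]

noncomputable def Pp (π : A →⋆ₐ[ℂ] (H →L[ℂ] H)) (π' : Aᵐᵒᵖ →⋆ₐ[ℂ] (H →L[ℂ] H))
    (x y : A) : H →L[ℂ] H := π x * π' (op (star y))

lemma Pp_mul (π : A →⋆ₐ[ℂ] (H →L[ℂ] H)) (π' : Aᵐᵒᵖ →⋆ₐ[ℂ] (H →L[ℂ] H))
    (hcomm : ∀ (x : A) (β : Aᵐᵒᵖ), π x * π' β = π' β * π x)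
    (x y u v : A) : Pp π π' x y * Pp π π' u v = Pp π π' (x * u) (y * v) := by
  simp only [Pp, star_mul, op_mul, map_mul]
  rw [mul_assoc (π x), ← mul_assoc (π' (op (star y))), ← hcomm u,
    mul_assoc (π u), ← mul_assoc (π x)]

lemma Pp_sum_right (π : A →⋆ₐ[ℂ] (H →L[ℂ] H)) (π' : Aᵐᵒᵖ →⋆ₐ[ℂ] (H →L[ℂ] H))
    {κ : Type*} [Fintype κ] (x : A) (c : κ → A) :
    ∑ k : κ, Pp π π' x (c k) = Pp π π' x (∑ k : κ, c k) := by
  simp [Pp, star_sum, map_sum, Finset.mul_sum]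

lemma Pp_sum_left (π : A →⋆ₐ[ℂ] (H →L[ℂ] H)) (π' : Aᵐᵒᵖ →⋆ₐ[ℂ] (H →L[ℂ] H))
    {κ : Type*} [Fintype κ] (c : κ → A) (y : A) :
    ∑ k : κ, Pp π π' (c k) y = Pp π π' (∑ k : κ, c k) y := by
  simp [Pp, map_sum, Finset.sum_mul]

lemma Pp_one (π : A →⋆ₐ[ℂ] (H →L[ℂ] H)) (π' : Aᵐᵒᵖ →⋆ₐ[ℂ] (H →L[ℂ] H)) :
    Pp π π' 1 1 = 1 := by simp [Pp]

lemma fluct_eq (π : A →⋆ₐ[ℂ] (H →L[ℂ] H)) (π' : Aᵐᵒᵖ →⋆ₐ[ℂ] (H →L[ℂ] H))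
    (hcomm : ∀ (x : A) (β : Aᵐᵒᵖ), π x * π' β = π' β * π x)
    (D : H →L[ℂ] H) {ι : Type*} [Fintype ι] (a b : ι → A)
    (hnorm : ∑ j : ι, a j * b j = 1) :
    fluct π π' D a b =
      ∑ j : ι, ∑ k : ι, Pp π π' (a j) (a k) * D * Pp π π' (b j) (b k) := by
  have key : ∑ j : ι, ∑ k : ι, Pp π π' (a j) (a k) * Pp π π' (b j) (b k) = 1 := by
    have h1 : ∀ j k : ι, Pp π π' (a j) (a k) * Pp π π' (b j) (b k)
        = Pp π π' (a j * b j) (a k * b k) := fun j k => Pp_mul π π' hcomm _ _ _ _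
    simp only [h1, Pp_sum_right, hnorm, Pp_sum_left, Pp_one]
  have heta : eta π π' D a b = ∑ j : ι, ∑ k : ι,
      Pp π π' (a j) (a k) *
        (D * Pp π π' (b j) (b k) - Pp π π' (b j) (b k) * D) := rfl
  have h2 : ∑ j : ι, ∑ k : ι,
      Pp π π' (a j) (a k) * Pp π π' (b j) (b k) * D = D := by
    simp only [← Finset.sum_mul]
    rw [key, one_mul]
  unfold fluct
  rw [heta]
  simp only [mul_sub, Finset.sum_sub_distrib, ← mul_assoc]
  rw [h2]
  abel

lemma key_term (π : A →⋆ₐ[ℂ] (H →L[ℂ] H)) (π' : Aᵐᵒᵖ →⋆ₐ[ℂ] (H →L[ℂ] H))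
    (hcomm : ∀ (x : A) (β : Aᵐᵒᵖ), π x * π' β = π' β * π x)
    (D : H →L[ℂ] H) (x y u v p q r s : A) :
    Pp π π' x y * (Pp π π' u v * D * Pp π π' p q) * Pp π π' r s
      = Pp π π' (x * u) (y * v) * D * Pp π π' (p * r) (q * s) := by
  rw [← mul_assoc, ← mul_assoc, Pp_mul π π' hcomm, mul_assoc (Pp π π' (x * u) (y * v) * D),
    Pp_mul π π' hcomm]

/-- In the gauge setup, a fluctuation of a fluctuated operator is again a fluctuated
operator: if `A = ((aⱼ, bⱼ))_{j ∈ s}` and `A' = ((a'ᵢ, b'ᵢ))_{i ∈ t}` are both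
normalized families, then `(D_A)_{A'} = D_{A'A}`, where `A'A` is the family indexed
by `t × s` with entries `(A'A)_{(i,j)} = (a'ᵢ aⱼ, bⱼ b'ᵢ)`. -/
theorem fluct_fluct
    (π : A →⋆ₐ[ℂ] (H →L[ℂ] H)) (π' : Aᵐᵒᵖ →⋆ₐ[ℂ] (H →L[ℂ] H))
    (hcomm : ∀ (x : A) (β : Aᵐᵒᵖ), π x * π' β = π' β * π x)
    (D : H →L[ℂ] H)
    {ι ι' : Type*} [Fintype ι] [Fintype ι']
    (a b : ι → A) (a' b' : ι' → A)
    (hnorm : ∑ j : ι, a j * b j = 1)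
    (hnorm' : ∑ i : ι', a' i * b' i = 1) :
    fluct π π' (fluct π π' D a b) a' b' =
      fluct π π' D (fun p : ι' × ι => a' p.1 * a p.2) (fun p : ι' × ι => b p.2 * b' p.1) := by
  have hnorm'' : ∑ p : ι' × ι, (a' p.1 * a p.2) * (b p.2 * b' p.1) = 1 := by
    rw [Fintype.sum_prod_type]
    have : ∀ i : ι', ∑ j : ι, (a' i * a j) * (b j * b' i)
        = a' i * b' i := by
      intro i
      have : ∀ j : ι, (a' i * a j) * (b j * b' i) = a' i * ((a j * b j) * b' i) := by
        intro j; rw [mul_assoc, ← mul_assoc (a j)]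
      simp only [this, ← Finset.mul_sum, ← Finset.sum_mul, hnorm, one_mul]
    simp only [this, hnorm']
  rw [fluct_eq π π' hcomm _ a' b' hnorm', fluct_eq π π' hcomm D a b hnorm,
    fluct_eq π π' hcomm D _ _ hnorm'']
  simp only [Fintype.sum_prod_type, Finset.mul_sum, Finset.sum_mul]
  refine Finset.sum_congr rfl fun i _ => ?_
  rw [Finset.sum_comm]
  exact Finset.sum_congr rfl fun j _ => Finset.sum_congr rfl fun l _ =>
    Finset.sum_congr rfl fun k _ => key_term π π' hcomm D _ _ _ _ _ _ _ _
end

section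
/- In the gauge setup, suppose additionally that 𝒥 is a fundamental symmetry on H commuting with π(a) and π'(β) for all a ∈ A, β ∈ Aᵐᵒᵖ, and that the bounded operator D is Krein-self-adjoint: 𝒥 D* 𝒥 = D. If the family A = ((a_j, b_j))_{j ∈ s} is normalized, then η_D applied to the conjugate family Ā := ((b_j*, a_j*))_{j ∈ s} equals the Krein adjoint of η_D(A): η_D(Ā) = 𝒥 (η_D(A))* 𝒥. In particular η_D(A) is Krein-self-adjoint whenever Ā = A. -/
open MulOpposite

variable {A : Type*} [Ring A] [Algebra ℂ A] [StarRing A]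
variable {H : Type*} [NormedAddCommGroup H] [InnerProductSpace ℂ H] [CompleteSpace H]

private lemma krein_mul {R : Type*} [Ring R] [StarRing R] {J : R} (hJ2 : J * J = 1)
    (U V : R) : J * star (U * V) * J = (J * star V * J) * (J * star U * J) := by
  rw [star_mul]
  calc J * (star V * star U) * J = (J * star V) * 1 * (star U * J) := by noncomm_ring
    _ = (J * star V) * (J * J) * (star U * J) := by rw [hJ2]
    _ = (J * star V * J) * (J * star U * J) := by noncomm_ring

private lemma krein_fix {R : Type*} [Ring R] {J X : R} (hJ2 : J * J = 1)
    (hX : J * X = X * J) : J * X * J = X := by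
  rw [hX, mul_assoc, hJ2, mul_one]


/-- In the gauge setup, let `𝒥` be a fundamental symmetry commuting with the commuting
star-representations `π` and `π'`, and let `D` be a bounded Krein-self-adjoint
operator (`𝒥 D* 𝒥 = D`).  If the family `A = ((aⱼ, bⱼ))ⱼ` is normalized, then `η_D`
applied to the conjugate family `Ā = ((bⱼ*, aⱼ*))ⱼ` equals the Krein adjoint of
`η_D(A)`:  `η_D(Ā) = 𝒥 (η_D(A))* 𝒥`.  In particular `η_D(A)` is Krein-self-adjoint
whenever `Ā = A`. -/
theorem eta_conj_eq_krein_adjoint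
    (π : A →⋆ₐ[ℂ] (H →L[ℂ] H)) (π' : Aᵐᵒᵖ →⋆ₐ[ℂ] (H →L[ℂ] H))
    (hcomm : ∀ (x : A) (β : Aᵐᵒᵖ), π x * π' β = π' β * π x)
    (J : H →L[ℂ] H) (hJsa : IsSelfAdjoint J) (hJ2 : J * J = 1)
    (hJπ : ∀ x : A, J * π x = π x * J)
    (hJπ' : ∀ β : Aᵐᵒᵖ, J * π' β = π' β * J)
    (D : H →L[ℂ] H) (hD : J * star D * J = D)
    {ι : Type*} [Fintype ι] (a b : ι → A)
    (hnorm : ∑ j : ι, a j * b j = 1) :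
    eta π π' D (fun j => star (b j)) (fun j => star (a j)) =
      J * star (eta π π' D a b) * J ∧
    ((∀ j : ι, star (b j) = a j ∧ star (a j) = b j) →
      J * star (eta π π' D a b) * J = eta π π' D a b) := by
  -- krein adjoint of π x * π' β is π (star x) * π' (star β)
  have hfix : ∀ (x : A) (β : Aᵐᵒᵖ),
      J * star (π x * π' β) * J = π (star x) * π' (star β) := by
    intro x β
    have h1 : star (π x * π' β) = π (star x) * π' (star β) := by
      rw [star_mul, ← map_star, ← map_star]
      exact (hcomm _ _).symm
    rw [h1]
    refine krein_fix hJ2 ?_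
    calc J * (π (star x) * π' (star β)) = (J * π (star x)) * π' (star β) := by
          rw [mul_assoc]
      _ = π (star x) * (J * π' (star β)) := by rw [hJπ, mul_assoc]
      _ = π (star x) * π' (star β) * J := by rw [hJπ', mul_assoc]
  have hterm : ∀ j k : ι,
      J * star (π (a j) * π' (op (star (a k))) *
        (D * (π (b j) * π' (op (star (b k)))) - π (b j) * π' (op (star (b k))) * D)) * J
      = (π (star (b j)) * π' (op (b k)) * D - D * (π (star (b j)) * π' (op (b k)))) *
          (π (star (a j)) * π' (op (a k))) := by
    intro j k
    rw [krein_mul hJ2 (π (a j) * π' (op (star (a k))))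
      (D * (π (b j) * π' (op (star (b k)))) - π (b j) * π' (op (star (b k))) * D)]
    have hsub : J * star
        (D * (π (b j) * π' (op (star (b k)))) - π (b j) * π' (op (star (b k))) * D) * J
        = π (star (b j)) * π' (op (b k)) * D - D * (π (star (b j)) * π' (op (b k))) := by
      rw [star_sub, mul_sub, sub_mul,
        krein_mul hJ2 D (π (b j) * π' (op (star (b k)))),
        krein_mul hJ2 (π (b j) * π' (op (star (b k)))) D, hD,
        hfix (b j) (op (star (b k)))]
      simp [← op_star]
    rw [hsub, hfix (a j) (op (star (a k)))]
    simp [← op_star]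
  -- the normalization sum
  have hS : (∑ j : ι, ∑ k : ι,
      (π (star (b j)) * π' (op (b k))) * (π (star (a j)) * π' (op (a k)))) = 1 := by
    have h1 : ∀ j k : ι, (π (star (b j)) * π' (op (b k))) * (π (star (a j)) * π' (op (a k)))
        = π (star (a j * b j)) * π' (op (a k * b k)) := by
      intro j k
      calc (π (star (b j)) * π' (op (b k))) * (π (star (a j)) * π' (op (a k)))
          = π (star (b j)) * (π' (op (b k)) * π (star (a j))) * π' (op (a k)) := by
            noncomm_ring
        _ = π (star (b j)) * (π (star (a j)) * π' (op (b k))) * π' (op (a k)) := by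
            rw [← hcomm]
        _ = (π (star (b j)) * π (star (a j))) * (π' (op (b k)) * π' (op (a k))) := by
            noncomm_ring
        _ = π (star (a j * b j)) * π' (op (a k * b k)) := by
            rw [← map_mul, ← map_mul, ← star_mul, ← op_mul]
    simp only [h1]
    rw [← Finset.sum_mul_sum]
    rw [← map_sum, ← map_sum, ← star_sum, ← Finset.op_sum, hnorm]
    simp
  have key : eta π π' D (fun j => star (b j)) (fun j => star (a j)) =
      J * star (eta π π' D a b) * J := by
    unfold eta
    simp only [star_sum, Finset.mul_sum, Finset.sum_mul]
    simp only [hterm, star_star]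
    rw [← sub_eq_zero, ← Finset.sum_sub_distrib]
    have h2 : ∀ j : ι, (∑ k : ι, π (star (b j)) * π' (op (b k)) *
          (D * (π (star (a j)) * π' (op (a k))) - π (star (a j)) * π' (op (a k)) * D))
        - (∑ k : ι, (π (star (b j)) * π' (op (b k)) * D - D * (π (star (b j)) * π' (op (b k)))) *
          (π (star (a j)) * π' (op (a k))))
        = ∑ k : ι, (D * ((π (star (b j)) * π' (op (b k))) * (π (star (a j)) * π' (op (a k))))
            - ((π (star (b j)) * π' (op (b k))) * (π (star (a j)) * π' (op (a k)))) * D) := by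
      intro j
      rw [← Finset.sum_sub_distrib]
      refine Finset.sum_congr rfl fun k _ => ?_
      noncomm_ring
    simp only [h2]
    have h3 : (∑ j : ι, ∑ k : ι,
        (D * ((π (star (b j)) * π' (op (b k))) * (π (star (a j)) * π' (op (a k))))
          - ((π (star (b j)) * π' (op (b k))) * (π (star (a j)) * π' (op (a k)))) * D))
        = D * (∑ j : ι, ∑ k : ι, (π (star (b j)) * π' (op (b k))) * (π (star (a j)) * π' (op (a k))))
          - (∑ j : ι, ∑ k : ι, (π (star (b j)) * π' (op (b k))) * (π (star (a j)) * π' (op (a k)))) * D := by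
      simp only [Finset.sum_sub_distrib, Finset.mul_sum, Finset.sum_mul]
    rw [h3, hS, mul_one, one_mul, sub_self]
  refine ⟨key, fun h => ?_⟩
  have ha : (fun j => star (b j)) = a := funext fun j => (h j).1
  have hb : (fun j => star (a j)) = b := funext fun j => (h j).2
  rw [← key, ha, hb]
end

section
/- In the gauge setup, let u ∈ A be unitary (u* u = u u* = 1) and set ρ(u) := π(u) π'(op(u*)). If the family A = ((a_j, b_j))_{j ∈ s} is normalized, then the gauge-transformed family u·A := ((u a_j, b_j u*))_{j ∈ s} is normalized and the fluctuated operators satisfy D_{u·A} = ρ(u) · D_A · ρ(u)*, where ρ(u)* = π(u*) π'(op(u)). Moreover ρ(u) is a unitary operator on H. -/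
open MulOpposite

variable {A : Type*} [Ring A] [Algebra ℂ A] [StarRing A]
variable {H : Type*} [NormedAddCommGroup H] [InnerProductSpace ℂ H] [CompleteSpace H]

/-- In the gauge setup, let `u ∈ A` be unitary and set `ρ(u) := π(u) π'(op u*)`.
If the family `A = ((aⱼ, bⱼ))ⱼ` is normalized, then the gauge-transformed family
`u·A := ((u aⱼ, bⱼ u*))ⱼ` is normalized, and `D_{u·A} = ρ(u) · D_A · ρ(u)*`,
where `ρ(u)* = π(u*) π'(op u)`.  Moreover `ρ(u)` is a unitary operator on `H`. -/
theorem fluct_gauge_transform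
    (π : A →⋆ₐ[ℂ] (H →L[ℂ] H)) (π' : Aᵐᵒᵖ →⋆ₐ[ℂ] (H →L[ℂ] H))
    (hcomm : ∀ (x : A) (β : Aᵐᵒᵖ), π x * π' β = π' β * π x)
    (D : H →L[ℂ] H) {ι : Type*} [Fintype ι] (a b : ι → A)
    (hnorm : ∑ j : ι, a j * b j = 1)
    (u : A) (hu₁ : star u * u = 1) (hu₂ : u * star u = 1) :
    (∑ j : ι, (u * a j) * (b j * star u) = 1) ∧
    star (π u * π' (op (star u))) = π (star u) * π' (op u) ∧
    fluct π π' D (fun j => u * a j) (fun j => b j * star u) =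
      (π u * π' (op (star u))) * fluct π π' D a b * star (π u * π' (op (star u))) ∧
    (π u * π' (op (star u))) ∈ unitary (H →L[ℂ] H) := by
  have swap : ∀ (x : A) (β : Aᵐᵒᵖ) (y : A) (γ : Aᵐᵒᵖ),
      π (x * y) * π' (β * γ) = (π x * π' β) * (π y * π' γ) := by
    intro x β y γ
    have h : π y * (π' β * π' γ) = π' β * (π y * π' γ) := by
      rw [← mul_assoc, hcomm, mul_assoc]
    simp only [map_mul, mul_assoc, h]
  have hstar : star (π u * π' (op (star u))) = π (star u) * π' (op u) := by
    rw [star_mul, ← map_star, ← map_star, ← op_star, star_star, hcomm]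
  set ρ := π u * π' (op (star u)) with hρdef
  set ρ' := π (star u) * π' (op u) with hρ'def
  have h1 : ρ * ρ' = 1 := by
    rw [hρdef, hρ'def, ← swap, ← op_mul, hu₂, op_one, map_one, map_one, one_mul]
  have h2 : ρ' * ρ = 1 := by
    rw [hρdef, hρ'def, ← swap, ← op_mul, hu₁, op_one, map_one, map_one, one_mul]
  refine ⟨?_, hstar, ?_, ⟨by rw [hstar]; exact h2, by rw [hstar]; exact h1⟩⟩
  · calc ∑ j : ι, (u * a j) * (b j * star u)
        = u * (∑ j : ι, a j * b j) * star u := by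
          rw [Finset.mul_sum, Finset.sum_mul]
          exact Finset.sum_congr rfl fun j _ => by noncomm_ring
      _ = 1 := by rw [hnorm, mul_one, hu₂]
  · have hPQ : ∑ j : ι, ∑ k : ι,
        (π (a j) * π' (op (star (a k)))) * (π (b j) * π' (op (star (b k)))) = 1 := by
      have hterm : ∀ j k : ι,
          (π (a j) * π' (op (star (a k)))) * (π (b j) * π' (op (star (b k)))) =
            π (a j * b j) * π' (op (star (a k * b k))) := by
        intro j k
        rw [star_mul, op_mul, swap]
      calc ∑ j : ι, ∑ k : ι,
            (π (a j) * π' (op (star (a k)))) * (π (b j) * π' (op (star (b k))))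
          = ∑ j : ι, ∑ k : ι, π (a j * b j) * π' (op (star (a k * b k))) := by
            exact Finset.sum_congr rfl fun j _ => Finset.sum_congr rfl fun k _ => hterm j k
        _ = (∑ j : ι, π (a j * b j)) * (∑ k : ι, π' (op (star (a k * b k)))) := by
            rw [Finset.sum_mul_sum]
        _ = 1 := by
            rw [← map_sum, ← map_sum, ← Finset.op_sum, ← star_sum, hnorm, star_one, op_one,
              map_one, map_one, one_mul]
    have hA : ∀ j k : ι, π (u * a j) * π' (op (star (u * a k))) =
        ρ * (π (a j) * π' (op (star (a k)))) := by
      intro j k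
      rw [hρdef, ← swap, star_mul, op_mul]
    have hB : ∀ j k : ι, π (b j * star u) * π' (op (star (b k * star u))) =
        (π (b j) * π' (op (star (b k)))) * ρ' := by
      intro j k
      rw [hρ'def, ← swap, star_mul, star_star, op_mul]
    rw [hstar]
    simp only [fluct, eta]
    have key : ∀ j k : ι,
        π (u * a j) * π' (op (star (u * a k))) *
          (D * (π (b j * star u) * π' (op (star (b k * star u)))) -
            π (b j * star u) * π' (op (star (b k * star u))) * D) =
        ρ * ((π (a j) * π' (op (star (a k)))) *
              (D * (π (b j) * π' (op (star (b k)))) -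
                π (b j) * π' (op (star (b k))) * D) * ρ' +
            ((π (a j) * π' (op (star (a k)))) * (π (b j) * π' (op (star (b k))))) * (D * ρ') -
            ((π (a j) * π' (op (star (a k)))) * (π (b j) * π' (op (star (b k))))) * (ρ' * D)) := by
      intro j k
      rw [hA, hB]
      noncomm_ring
    calc D + ∑ j : ι, ∑ k : ι,
          π (u * a j) * π' (op (star (u * a k))) *
            (D * (π (b j * star u) * π' (op (star (b k * star u)))) -
              π (b j * star u) * π' (op (star (b k * star u))) * D)
        = D + ρ * ((∑ j : ι, ∑ k : ι,
            π (a j) * π' (op (star (a k))) *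
              (D * (π (b j) * π' (op (star (b k)))) -
                π (b j) * π' (op (star (b k))) * D)) * ρ' + 1 * (D * ρ') - 1 * (ρ' * D)) := by
          congr 1
          simp only [key, ← Finset.mul_sum]
          congr 1
          simp only [Finset.sum_sub_distrib, Finset.sum_add_distrib, ← Finset.sum_mul, hPQ]
      _ = ρ * (D + ∑ j : ι, ∑ k : ι,
            π (a j) * π' (op (star (a k))) *
              (D * (π (b j) * π' (op (star (b k)))) -
                π (b j) * π' (op (star (b k))) * D)) * ρ' := by
          have expand : ∀ S : H →L[ℂ] H,
              D + ρ * (S * ρ' + 1 * (D * ρ') - 1 * (ρ' * D)) =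
                ρ * (D + S) * ρ' + (D - ρ * ρ' * D) := by
            intro S; noncomm_ring
          rw [expand, h1, one_mul, sub_self, add_zero]
end

section
/- In the gauge setup, suppose additionally that 𝒥 is a fundamental symmetry on H commuting with π(a) and π'(β) for all a ∈ A, β ∈ Aᵐᵒᵖ. Let u ∈ A be unitary and ρ(u) := π(u) π'(op(u*)). If the family A = ((a_j, b_j))_{j ∈ s} is normalized, then the Krein action is gauge invariant: for every ψ ∈ H, ⟨𝒥(ρ(u)ψ), D_{u·A}(ρ(u)ψ)⟩ = ⟨𝒥ψ, D_A ψ⟩, where u·A := ((u a_j, b_j u*))_{j ∈ s}. -/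
open MulOpposite

variable {A : Type*} [Ring A] [Algebra ℂ A] [StarRing A]
variable {H : Type*} [NormedAddCommGroup H] [InnerProductSpace ℂ H] [CompleteSpace H]

/-! The gauge transformation `D_A ↦ D_{u·A}` is conjugation by the unitary `ρ(u)`, and
conjugating by a unitary that commutes with `𝒥` leaves the Krein form unchanged. -/

/-- The commutators produce the extra terms `ρ D ρ' - D`, which is exactly what turns `D`
into `ρ D ρ'`. -/
theorem add_sum_sum_conj_commutator {R ι : Type*} [Ring R] [Fintype ι] {ρ ρ' : R}
    (hρ : ρ * ρ' = 1) (D : R) {P Q : ι → ι → R} (hPQ : ∑ j, ∑ k, P j k * Q j k = 1) :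
    D + ∑ j, ∑ k, ρ * P j k * (D * (Q j k * ρ') - Q j k * ρ' * D)
      = ρ * (D + ∑ j, ∑ k, P j k * (D * Q j k - Q j k * D)) * ρ' := by
  have hterm : ∀ j k, ρ * P j k * (D * (Q j k * ρ') - Q j k * ρ' * D)
      = ρ * (P j k * (D * Q j k - Q j k * D)) * ρ'
        + (ρ * (P j k * Q j k) * D * ρ' - ρ * (P j k * Q j k) * ρ' * D) := by
    intro j k; noncomm_ring
  simp only [hterm, Finset.sum_add_distrib, Finset.sum_sub_distrib, ← Finset.mul_sum,
    ← Finset.sum_mul, hPQ, mul_one, hρ, one_mul]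
  noncomm_ring

theorem inner_apply_conj_of_mem_unitary {𝕜 E : Type*} [RCLike 𝕜] [NormedAddCommGroup E]
    [InnerProductSpace 𝕜 E] [CompleteSpace E] {U : E →L[𝕜] E} (hU : U ∈ unitary (E →L[𝕜] E))
    {J : E →L[𝕜] E} (hJU : Commute J U) (T : E →L[𝕜] E) (ψ : E) :
    inner 𝕜 (J (U ψ)) ((U * T * star U) (U ψ)) = inner 𝕜 (J ψ) (T ψ) := by
  have hUψ : star U (U ψ) = ψ := by
    rw [← mul_apply_eq_comp, Unitary.star_mul_self_of_mem hU, one_apply_eq_self]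
  calc inner 𝕜 (J (U ψ)) ((U * T * star U) (U ψ)) = inner 𝕜 (U (J ψ)) (U (T ψ)) := by
        rw [← mul_apply_eq_comp J U, hJU.eq]
        simp only [mul_apply_eq_comp, hUψ]
    _ = inner 𝕜 (J ψ) (T ψ) := U.inner_map_map_of_mem_unitary hU _ _

section Bimul

variable (π : A →⋆ₐ[ℂ] (H →L[ℂ] H)) (π' : Aᵐᵒᵖ →⋆ₐ[ℂ] (H →L[ℂ] H))

/-- The operator `ψ ↦ x ψ y*` of the bimodule `H`; `ρ(u) = bimul π π' u u`. -/
noncomputable def bimul (x y : A) : H →L[ℂ] H := π x * π' (op (star y))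

theorem eta_eq_sum_bimul (D : H →L[ℂ] H) {ι : Type*} [Fintype ι] (a b : ι → A) :
    eta π π' D a b = ∑ j, ∑ k, bimul π π' (a j) (a k) *
      (D * bimul π π' (b j) (b k) - bimul π π' (b j) (b k) * D) :=
  rfl

theorem bimul_one_one : bimul π π' 1 1 = 1 := by
  simp [bimul]

theorem sum_sum_bimul {ι : Type*} [Fintype ι] (x y : ι → A) :
    ∑ j, ∑ k, bimul π π' (x j) (y k) = bimul π π' (∑ j, x j) (∑ k, y k) := by
  simp only [bimul, ← Finset.mul_sum, ← Finset.sum_mul, ← map_sum, star_sum, Finset.op_sum]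

theorem commute_bimul {J : H →L[ℂ] H} (hJπ : ∀ x, Commute J (π x))
    (hJπ' : ∀ β, Commute J (π' β)) (x y : A) : Commute J (bimul π π' x y) :=
  (hJπ x).mul_right (hJπ' _)

variable {π π'} (hcomm : ∀ x β, Commute (π x) (π' β))
include hcomm

theorem bimul_mul_bimul (x y x' y' : A) :
    bimul π π' x y * bimul π π' x' y' = bimul π π' (x * x') (y * y') := by
  rw [bimul, bimul, bimul, (hcomm x' _).symm.mul_mul_mul_comm, star_mul, op_mul, map_mul,
    map_mul]

theorem star_bimul (x y : A) : star (bimul π π' x y) = bimul π π' (star x) (star y) := by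
  rw [bimul, bimul, star_mul, ← map_star, ← map_star, ← op_star, star_star, hcomm]

theorem bimul_mem_unitary {u : A} (hu : u ∈ unitary A) :
    bimul π π' u u ∈ unitary (H →L[ℂ] H) := by
  refine Unitary.mem_iff.mpr ⟨?_, ?_⟩
  · rw [star_bimul hcomm, bimul_mul_bimul hcomm, Unitary.star_mul_self_of_mem hu, bimul_one_one]
  · rw [star_bimul hcomm, bimul_mul_bimul hcomm, Unitary.mul_star_self_of_mem hu, bimul_one_one]

theorem fluct_gauge (D : H →L[ℂ] H) {ι : Type*} [Fintype ι] {a b : ι → A}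
    (hnorm : ∑ j, a j * b j = 1) {u : A} (hu : u ∈ unitary A) :
    fluct π π' D (fun j => u * a j) (fun j => b j * star u)
      = bimul π π' u u * fluct π π' D a b * star (bimul π π' u u) := by
  have hPQ : ∑ j, ∑ k, bimul π π' (a j) (a k) * bimul π π' (b j) (b k) = 1 := by
    simp only [bimul_mul_bimul hcomm]
    rw [sum_sum_bimul, hnorm, bimul_one_one]
  have hleft : ∀ j k, bimul π π' (u * a j) (u * a k)
      = bimul π π' u u * bimul π π' (a j) (a k) := fun j k =>
    (bimul_mul_bimul hcomm _ _ _ _).symm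
  have hright : ∀ j k, bimul π π' (b j * star u) (b k * star u)
      = bimul π π' (b j) (b k) * star (bimul π π' u u) := fun j k => by
    rw [star_bimul hcomm, bimul_mul_bimul hcomm]
  rw [fluct, fluct, eta_eq_sum_bimul, eta_eq_sum_bimul, ← add_sum_sum_conj_commutator
    (Unitary.mul_star_self_of_mem (bimul_mem_unitary hcomm hu)) D hPQ]
  simp only [hleft, hright]

end Bimul

theorem krein_action_gauge_invariant_general
    (π : A →⋆ₐ[ℂ] (H →L[ℂ] H)) (π' : Aᵐᵒᵖ →⋆ₐ[ℂ] (H →L[ℂ] H))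
    (hcomm : ∀ (x : A) (β : Aᵐᵒᵖ), π x * π' β = π' β * π x)
    (J : H →L[ℂ] H)
    (hJπ : ∀ x : A, J * π x = π x * J)
    (hJπ' : ∀ β : Aᵐᵒᵖ, J * π' β = π' β * J)
    (D : H →L[ℂ] H) {ι : Type*} [Fintype ι] (a b : ι → A)
    (hnorm : ∑ j : ι, a j * b j = 1)
    (u : A) (hu₁ : star u * u = 1) (hu₂ : u * star u = 1) :
    ∀ ψ : H,
      (inner ℂ (J ((π u * π' (op (star u))) ψ))
             ((fluct π π' D (fun j => u * a j) (fun j => b j * star u))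
               ((π u * π' (op (star u))) ψ)) : ℂ)
      = inner ℂ (J ψ) ((fluct π π' D a b) ψ) := by
  intro ψ
  have hu : u ∈ unitary A := Unitary.mem_iff.mpr ⟨hu₁, hu₂⟩
  rw [fluct_gauge hcomm D hnorm hu]
  exact inner_apply_conj_of_mem_unitary (bimul_mem_unitary hcomm hu)
    (commute_bimul π π' hJπ hJπ' u u) _ ψ

/-- In the gauge setup, let `𝒥` be a fundamental symmetry commuting with the commuting
star-representations `π` and `π'`, let `u ∈ A` be unitary and `ρ(u) = π(u) π'(op u*)`.
If the family `A = ((aⱼ, bⱼ))ⱼ` is normalized, then the Krein action is gauge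
invariant: `⟪𝒥(ρ(u)ψ), D_{u·A}(ρ(u)ψ)⟫ = ⟪𝒥ψ, D_A ψ⟫` for every `ψ ∈ H`, where
`u·A := ((u aⱼ, bⱼ u*))ⱼ`. -/
theorem krein_action_gauge_invariant
    (π : A →⋆ₐ[ℂ] (H →L[ℂ] H)) (π' : Aᵐᵒᵖ →⋆ₐ[ℂ] (H →L[ℂ] H))
    (hcomm : ∀ (x : A) (β : Aᵐᵒᵖ), π x * π' β = π' β * π x)
    (J : H →L[ℂ] H) (hJsa : IsSelfAdjoint J) (hJ2 : J * J = 1)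
    (hJπ : ∀ x : A, J * π x = π x * J)
    (hJπ' : ∀ β : Aᵐᵒᵖ, J * π' β = π' β * J)
    (D : H →L[ℂ] H) {ι : Type*} [Fintype ι] (a b : ι → A)
    (hnorm : ∑ j : ι, a j * b j = 1)
    (u : A) (hu₁ : star u * u = 1) (hu₂ : u * star u = 1) :
    ∀ ψ : H,
      (inner ℂ (J ((π u * π' (op (star u))) ψ))
             ((fluct π π' D (fun j => u * a j) (fun j => b j * star u))
               ((π u * π' (op (star u))) ψ)) : ℂ)
      = inner ℂ (J ψ) ((fluct π π' D a b) ψ) :=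
  krein_action_gauge_invariant_general π π' hcomm J hJπ hJπ' D a b hnorm u hu₁ hu₂
end

section
/- The gauge group of the electro-weak finite space equals (U(1) × SU(2))/ℤ₂: the map ρ : Circle × SU(2, ℂ) → U(4, ℂ) defined by ρ(λ, q) = the block-diagonal 4×4 matrix with entries ρ₀₀ = 1, ρ₁₁ = λ⁻², ρ_{2+i, 2+j} = λ⁻¹·q_{ij} for i, j ∈ {0,1}, and all other entries 0, is a group homomorphism whose kernel is exactly the two-element subgroup {(1, 1), (−1, −1)} (isomorphic to ℤ/2ℤ). -/
/-! `ρ(λ, q)` is the block-diagonal matrix `diag(1, λ⁻²) ⊕ λ⁻¹ q`. Block-diagonal matrices are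
multiplied, conjugate-transposed and compared block by block, so `ρ` is a homomorphism into the
unitary group, and `ρ(λ, q) = 1` exactly when `λ⁻² = 1` and `λ⁻¹ q = 1`, that is, when `λ = ±1`
and `q = λ`. -/

open Matrix

namespace ElectroWeak

section

variable {R : Type*} [CommRing R]

def ewMatrix (a : R) (q : Matrix (Fin 2) (Fin 2) R) : Matrix (Fin 4) (Fin 4) R :=
  reindex finSumFinEquiv finSumFinEquiv (fromBlocks (diagonal ![1, a ^ 2]) 0 0 (a • q))

theorem ewMatrix_eq_of (a : R) (q : Matrix (Fin 2) (Fin 2) R) :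
    ewMatrix a q =
      !![1, 0, 0, 0;
         0, a ^ 2, 0, 0;
         0, 0, a * q 0 0, a * q 0 1;
         0, 0, a * q 1 0, a * q 1 1] := by
  ext i j
  fin_cases i <;> fin_cases j <;> rfl

theorem ewMatrix_mul (a b : R) (p q : Matrix (Fin 2) (Fin 2) R) :
    ewMatrix a p * ewMatrix b q = ewMatrix (a * b) (p * q) := by
  simp only [ewMatrix, reindex_apply, submatrix_mul_equiv, fromBlocks_multiply,
    diagonal_mul_diagonal, mul_zero, zero_mul, add_zero, zero_add, smul_mul_smul_comm]
  congr
  ext i; fin_cases i <;> simp [mul_pow]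

theorem ewMatrix_one : ewMatrix (1 : R) 1 = 1 := by
  have hdiag : diagonal ![(1 : R), 1 ^ 2] = 1 := by
    rw [← diagonal_one]; congr; ext i; fin_cases i <;> simp
  rw [ewMatrix, one_smul, hdiag, fromBlocks_one, reindex_apply, submatrix_one_equiv]

theorem star_ewMatrix [StarRing R] (a : R) (q : Matrix (Fin 2) (Fin 2) R) :
    star (ewMatrix a q) = ewMatrix (star a) (star q) := by
  simp only [ewMatrix, reindex_apply, star_eq_conjTranspose, conjTranspose_submatrix,
    fromBlocks_conjTranspose, diagonal_conjTranspose, conjTranspose_zero, conjTranspose_smul]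
  congr
  ext i; fin_cases i <;> simp

theorem ewMatrix_mem_unitaryGroup [StarRing R] {a : R} {q : Matrix (Fin 2) (Fin 2) R}
    (ha : a ∈ unitary R) (hq : q ∈ unitaryGroup (Fin 2) R) :
    ewMatrix a q ∈ unitaryGroup (Fin 4) R := by
  rw [mem_unitaryGroup_iff', star_ewMatrix, ewMatrix_mul, Unitary.star_mul_self_of_mem ha,
    mem_unitaryGroup_iff'.mp hq, ewMatrix_one]

theorem ewMatrix_inj {a b : R} {p q : Matrix (Fin 2) (Fin 2) R} :
    ewMatrix a p = ewMatrix b q ↔ a ^ 2 = b ^ 2 ∧ a • p = b • q := by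
  rw [ewMatrix, ewMatrix, (reindex _ _).injective.eq_iff, fromBlocks_inj,
    diagonal_injective.eq_iff]
  simp

theorem ewMatrix_eq_one_iff [NoZeroDivisors R] {a : R} {q : Matrix (Fin 2) (Fin 2) R} :
    ewMatrix a q = 1 ↔ (a = 1 ∧ q = 1) ∨ (a = -1 ∧ q = -1) := by
  rw [← ewMatrix_one, ewMatrix_inj, one_pow, sq_eq_one_iff, one_smul]
  constructor
  · rintro ⟨rfl | rfl, h⟩
    · simp_all
    · simp_all [neg_eq_iff_eq_neg]
  · rintro (⟨rfl, rfl⟩ | ⟨rfl, rfl⟩) <;> simp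

end

theorem _root_.Circle.coe_mem_unitary (z : Circle) : (z : ℂ) ∈ unitary ℂ := by
  rw [Unitary.mem_iff_star_mul_self, Complex.star_def, Complex.conj_mul', Circle.norm_coe]
  simp

noncomputable def gaugeRep : Circle × specialUnitaryGroup (Fin 2) ℂ →* unitaryGroup (Fin 4) ℂ where
  toFun p := ⟨ewMatrix (p.1 : ℂ)⁻¹ p.2,
    ewMatrix_mem_unitaryGroup (Circle.coe_inv p.1 ▸ p.1⁻¹.coe_mem_unitary) p.2.2.1⟩
  map_one' := Subtype.ext <| by simp [ewMatrix_one]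
  map_mul' p p' := Subtype.ext <| by simp [ewMatrix_mul, mul_comm]

end ElectroWeak

/-- The gauge group of the electro-weak finite space equals `(U(1) × SU(2))/ℤ₂`:
the map `ρ : Circle × SU(2,ℂ) → U(4,ℂ)` given by the block-diagonal matrix
`ρ(λ, q) = diag(1, λ⁻²) ⊕ λ⁻¹·q` is a group homomorphism whose kernel is exactly
the two-element subgroup `{(1, 1), (−1, −1)} ≃ ℤ/2ℤ`. -/
theorem gauge_group_EW :
    ∃ ρ : (Circle × Matrix.specialUnitaryGroup (Fin 2) ℂ) →*
        Matrix.unitaryGroup (Fin 4) ℂ,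
      (∀ (l : Circle) (q : Matrix.specialUnitaryGroup (Fin 2) ℂ),
        (ρ (l, q) : Matrix (Fin 4) (Fin 4) ℂ) =
          !![1, 0, 0, 0;
             0, ((l : ℂ))⁻¹ ^ 2, 0, 0;
             0, 0, (l : ℂ)⁻¹ * (q : Matrix (Fin 2) (Fin 2) ℂ) 0 0,
                   (l : ℂ)⁻¹ * (q : Matrix (Fin 2) (Fin 2) ℂ) 0 1;
             0, 0, (l : ℂ)⁻¹ * (q : Matrix (Fin 2) (Fin 2) ℂ) 1 0,
                   (l : ℂ)⁻¹ * (q : Matrix (Fin 2) (Fin 2) ℂ) 1 1]) ∧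
      (∀ (l : Circle) (q : Matrix.specialUnitaryGroup (Fin 2) ℂ),
        ρ (l, q) = 1 ↔
          (((l : ℂ) = 1 ∧ (q : Matrix (Fin 2) (Fin 2) ℂ) = 1) ∨
           ((l : ℂ) = -1 ∧ (q : Matrix (Fin 2) (Fin 2) ℂ) = -1))) := by
  refine ⟨ElectroWeak.gaugeRep, fun l q => ElectroWeak.ewMatrix_eq_of _ _, fun l q => ?_⟩
  rw [← Subtype.coe_inj, OneMemClass.coe_one]
  change ElectroWeak.ewMatrix (l : ℂ)⁻¹ q = 1 ↔ _
  rw [ElectroWeak.ewMatrix_eq_one_iff, inv_eq_one, inv_eq_iff_eq_inv, inv_neg, inv_one]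
end

section
/- The kernel of the Standard Model representation is ℤ₂: the map ρ : Circle × SU(2, ℂ) × U(3, ℂ) → GL(ℂ¹⁶) defined on ℂ⁴ ⊕ (ℂ² ⊗ ℂ³) ⊕ (ℂ² ⊗ ℂ³) by ρ(λ, q, b) = [diag(1, λ⁻²) ⊕ λ⁻¹·q] ⊕ [diag(λ, λ⁻¹) ⊗ conj(b)] ⊕ [q ⊗ conj(b)] (where ⊗ is the Kronecker product and conj(b) is the entrywise complex conjugate) is a group homomorphism whose kernel is exactly {(1, 1, 1), (−1, −1, −1)} (isomorphic to ℤ/2ℤ). Consequently the gauge group of the Standard Model finite space is (U(1) × SU(2) × U(3))/ℤ₂. -/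
open Kronecker

/-- The Standard Model representation `ρ(λ, q, b)` of one generation of fermions on
`ℂ⁴ ⊕ (ℂ² ⊗ ℂ³) ⊕ (ℂ² ⊗ ℂ³)`:
`ρ(λ, q, b) = [diag(1, λ⁻²) ⊕ λ⁻¹·q] ⊕ [diag(λ, λ⁻¹) ⊗ conj(b)] ⊕ [q ⊗ conj(b)]`. -/
noncomputable def rhoSM (l : Circle) (q : Matrix (Fin 2) (Fin 2) ℂ)
    (b : Matrix (Fin 3) (Fin 3) ℂ) :
    Matrix (Fin 4 ⊕ ((Fin 2 × Fin 3) ⊕ (Fin 2 × Fin 3)))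
      (Fin 4 ⊕ ((Fin 2 × Fin 3) ⊕ (Fin 2 × Fin 3))) ℂ :=
  Matrix.fromBlocks
    !![1, 0, 0, 0;
       0, (l : ℂ)⁻¹ ^ 2, 0, 0;
       0, 0, (l : ℂ)⁻¹ * q 0 0, (l : ℂ)⁻¹ * q 0 1;
       0, 0, (l : ℂ)⁻¹ * q 1 0, (l : ℂ)⁻¹ * q 1 1]
    0 0
    (Matrix.fromBlocks
      ((Matrix.diagonal ![(l : ℂ), (l : ℂ)⁻¹]) ⊗ₖ b.map (starRingEnd ℂ))
      0 0
      (q ⊗ₖ b.map (starRingEnd ℂ)))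

lemma fromBlocks_diag_mul {n m : Type*} [Fintype n] [Fintype m] [DecidableEq n] [DecidableEq m]
    (A A' : Matrix n n ℂ) (D D' : Matrix m m ℂ) :
    Matrix.fromBlocks (A * A') 0 0 (D * D') =
      Matrix.fromBlocks A 0 0 D * Matrix.fromBlocks A' 0 0 D' := by
  rw [Matrix.fromBlocks_multiply]; simp

set_option maxHeartbeats 1000000 in
lemma rhoSM_mul (l₁ l₂ : Circle) (q₁ q₂ : Matrix (Fin 2) (Fin 2) ℂ)
    (b₁ b₂ : Matrix (Fin 3) (Fin 3) ℂ) :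
    rhoSM (l₁ * l₂) (q₁ * q₂) (b₁ * b₂) = rhoSM l₁ q₁ b₁ * rhoSM l₂ q₂ b₂ := by
  have hcoe : ((l₁ * l₂ : Circle) : ℂ) = (l₁ : ℂ) * (l₂ : ℂ) := by push_cast; ring
  have hq : ∀ i j, (q₁ * q₂) i j = q₁ i 0 * q₂ 0 j + q₁ i 1 * q₂ 1 j := by
    intro i j; simp [Matrix.mul_apply, Fin.sum_univ_two]
  have hmap : (b₁ * b₂).map (starRingEnd ℂ) =
      b₁.map (starRingEnd ℂ) * b₂.map (starRingEnd ℂ) := Matrix.map_mul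
  have htop : (!![1, 0, 0, 0;
       0, ((l₁ * l₂ : Circle) : ℂ)⁻¹ ^ 2, 0, 0;
       0, 0, ((l₁ * l₂ : Circle) : ℂ)⁻¹ * (q₁*q₂) 0 0, ((l₁ * l₂ : Circle) : ℂ)⁻¹ * (q₁*q₂) 0 1;
       0, 0, ((l₁ * l₂ : Circle) : ℂ)⁻¹ * (q₁*q₂) 1 0, ((l₁ * l₂ : Circle) : ℂ)⁻¹ * (q₁*q₂) 1 1]
       : Matrix (Fin 4) (Fin 4) ℂ) =
      !![1, 0, 0, 0;
       0, (l₁ : ℂ)⁻¹ ^ 2, 0, 0;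
       0, 0, (l₁ : ℂ)⁻¹ * q₁ 0 0, (l₁ : ℂ)⁻¹ * q₁ 0 1;
       0, 0, (l₁ : ℂ)⁻¹ * q₁ 1 0, (l₁ : ℂ)⁻¹ * q₁ 1 1] *
      !![1, 0, 0, 0;
       0, (l₂ : ℂ)⁻¹ ^ 2, 0, 0;
       0, 0, (l₂ : ℂ)⁻¹ * q₂ 0 0, (l₂ : ℂ)⁻¹ * q₂ 0 1;
       0, 0, (l₂ : ℂ)⁻¹ * q₂ 1 0, (l₂ : ℂ)⁻¹ * q₂ 1 1] := by
    simp only [hq, hcoe, mul_inv]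
    ext i j
    fin_cases i <;> fin_cases j <;>
      simp [Matrix.mul_apply, Fin.sum_univ_four, Matrix.vecHead, Matrix.vecTail,
        Function.comp] <;> ring
  have hdvec : ![((l₁ * l₂ : Circle) : ℂ), ((l₁ * l₂ : Circle) : ℂ)⁻¹] =
      fun i => ![(l₁ : ℂ), (l₁ : ℂ)⁻¹] i * ![(l₂ : ℂ), (l₂ : ℂ)⁻¹] i := by
    funext i; fin_cases i <;> simp [hcoe, mul_inv] <;> ring
  have hK1 : (Matrix.diagonal ![((l₁ * l₂ : Circle) : ℂ), ((l₁ * l₂ : Circle) : ℂ)⁻¹]) ⊗ₖ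
      (b₁ * b₂).map (starRingEnd ℂ) =
      ((Matrix.diagonal ![(l₁ : ℂ), (l₁ : ℂ)⁻¹]) ⊗ₖ b₁.map (starRingEnd ℂ)) *
      ((Matrix.diagonal ![(l₂ : ℂ), (l₂ : ℂ)⁻¹]) ⊗ₖ b₂.map (starRingEnd ℂ)) := by
    rw [hdvec, ← Matrix.diagonal_mul_diagonal, hmap, Matrix.mul_kronecker_mul]
  have hK2 : (q₁ * q₂) ⊗ₖ (b₁ * b₂).map (starRingEnd ℂ) =
      (q₁ ⊗ₖ b₁.map (starRingEnd ℂ)) * (q₂ ⊗ₖ b₂.map (starRingEnd ℂ)) := by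
    rw [hmap, Matrix.mul_kronecker_mul]
  unfold rhoSM
  rw [htop, hK1, hK2, fromBlocks_diag_mul, fromBlocks_diag_mul]

set_option maxHeartbeats 1000000 in
lemma rhoSM_eq_one_forward (l : Circle) (q : Matrix (Fin 2) (Fin 2) ℂ)
    (b : Matrix (Fin 3) (Fin 3) ℂ) (h : rhoSM l q b = 1) :
    (((l : ℂ) = 1 ∧ q = 1 ∧ b = 1) ∨ ((l : ℂ) = -1 ∧ q = -1 ∧ b = -1)) := by
  have hl0 : (l : ℂ) ≠ 0 := Circle.coe_ne_zero l
  have hl2 : (l : ℂ)⁻¹ ^ 2 = 1 := by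
    have := congrFun (congrFun h (Sum.inl 1)) (Sum.inl 1)
    simpa [rhoSM, Matrix.one_apply] using this
  have hl2' : (l : ℂ) ^ 2 = 1 := by rw [inv_pow, inv_eq_one] at hl2; exact hl2
  have hq00 : (l : ℂ)⁻¹ * q 0 0 = 1 := by
    have := congrFun (congrFun h (Sum.inl 2)) (Sum.inl 2)
    simpa [rhoSM, Matrix.one_apply] using this
  have hq01 : (l : ℂ)⁻¹ * q 0 1 = 0 := by
    have := congrFun (congrFun h (Sum.inl 2)) (Sum.inl 3)
    simpa [rhoSM, Matrix.one_apply] using this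
  have hq10 : (l : ℂ)⁻¹ * q 1 0 = 0 := by
    have := congrFun (congrFun h (Sum.inl 3)) (Sum.inl 2)
    simpa [rhoSM, Matrix.one_apply] using this
  have hq11 : (l : ℂ)⁻¹ * q 1 1 = 1 := by
    have := congrFun (congrFun h (Sum.inl 3)) (Sum.inl 3)
    simpa [rhoSM, Matrix.one_apply] using this
  have hb : ∀ j j' : Fin 3, q 0 0 * (starRingEnd ℂ) (b j j') =
      if j = j' then 1 else 0 := by
    intro j j'
    have := congrFun (congrFun h (Sum.inr (Sum.inr (0, j)))) (Sum.inr (Sum.inr (0, j')))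
    simpa [rhoSM, Matrix.one_apply, Prod.ext_iff] using this

  have hq00' : q 0 0 = (l : ℂ) := by
    field_simp at hq00; exact hq00
  have hq11' : q 1 1 = (l : ℂ) := by
    field_simp at hq11; exact hq11
  have hq01' : q 0 1 = 0 := by
    rcases mul_eq_zero.mp hq01 with h' | h'
    · exact absurd h' (inv_ne_zero hl0)
    · exact h'
  have hq10' : q 1 0 = 0 := by
    rcases mul_eq_zero.mp hq10 with h' | h'
    · exact absurd h' (inv_ne_zero hl0)
    · exact h'
  have hb' : ∀ j j' : Fin 3, (l : ℂ) * (starRingEnd ℂ) (b j j') =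
      if j = j' then 1 else 0 := by
    intro j j'; have h1 := hb j j'; rwa [hq00'] at h1
  rcases sq_eq_one_iff.mp hl2' with hl | hl
  · refine Or.inl ⟨hl, ?_, ?_⟩
    · funext i j
      fin_cases i <;> fin_cases j <;>
        simp [Matrix.one_apply, hq00', hq01', hq10', hq11', hl]
    · funext j j'
      have h1 := hb' j j'
      rw [hl, one_mul] at h1
      have h2 := congrArg (starRingEnd ℂ) h1
      simp only [Complex.conj_conj, apply_ite, map_one, map_zero] at h2
      rw [Matrix.one_apply]
      split <;> simp_all
  · refine Or.inr ⟨hl, ?_, ?_⟩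
    · funext i j
      fin_cases i <;> fin_cases j <;>
        simp [Matrix.one_apply, hq00', hq01', hq10', hq11', hl]
    · funext j j'
      have h1 := hb' j j'
      rw [hl] at h1
      have h1' : (starRingEnd ℂ) (b j j') = -(if j = j' then 1 else 0) := by
        linear_combination -h1
      have h2 := congrArg (starRingEnd ℂ) h1'
      simp only [Complex.conj_conj, map_neg, apply_ite, map_one, map_zero] at h2
      rw [Matrix.neg_apply, Matrix.one_apply]
      split <;> simp_all

set_option maxHeartbeats 1000000 in
lemma rhoSM_one_of (l : Circle) (q : Matrix (Fin 2) (Fin 2) ℂ)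
    (b : Matrix (Fin 3) (Fin 3) ℂ) (hl : (l : ℂ) = 1) (hq : q = 1) (hb : b = 1) :
    rhoSM l q b = 1 := by
  unfold rhoSM
  rw [hl, hq, hb]
  have hT : (!![1, 0, 0, 0; 0, (1:ℂ)⁻¹ ^ 2, 0, 0;
      0, 0, (1:ℂ)⁻¹ * (1 : Matrix (Fin 2) (Fin 2) ℂ) 0 0, (1:ℂ)⁻¹ * (1 : Matrix (Fin 2) (Fin 2) ℂ) 0 1;
      0, 0, (1:ℂ)⁻¹ * (1 : Matrix (Fin 2) (Fin 2) ℂ) 1 0, (1:ℂ)⁻¹ * (1 : Matrix (Fin 2) (Fin 2) ℂ) 1 1]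
      : Matrix (Fin 4) (Fin 4) ℂ) = 1 := by
    funext i j
    fin_cases i <;> fin_cases j <;> simp [Matrix.one_apply, Matrix.vecHead, Matrix.vecTail]
  have hd : Matrix.diagonal ![(1:ℂ), (1:ℂ)⁻¹] = 1 := by
    funext i j; fin_cases i <;> fin_cases j <;> simp [Matrix.diagonal, Matrix.one_apply, Matrix.neg_apply] <;> norm_num
  have hm : (1 : Matrix (Fin 3) (Fin 3) ℂ).map (starRingEnd ℂ) = 1 := by
    funext i j; simp [Matrix.map_apply, Matrix.one_apply, apply_ite]
  rw [hT, hd, hm, Matrix.one_kronecker_one, Matrix.fromBlocks_one, Matrix.fromBlocks_one]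

set_option maxHeartbeats 1000000 in
lemma rhoSM_one_of_neg (l : Circle) (q : Matrix (Fin 2) (Fin 2) ℂ)
    (b : Matrix (Fin 3) (Fin 3) ℂ) (hl : (l : ℂ) = -1) (hq : q = -1) (hb : b = -1) :
    rhoSM l q b = 1 := by
  unfold rhoSM
  rw [hl, hq, hb]
  have hT : (!![1, 0, 0, 0; 0, (-1:ℂ)⁻¹ ^ 2, 0, 0;
      0, 0, (-1:ℂ)⁻¹ * (-1 : Matrix (Fin 2) (Fin 2) ℂ) 0 0, (-1:ℂ)⁻¹ * (-1 : Matrix (Fin 2) (Fin 2) ℂ) 0 1;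
      0, 0, (-1:ℂ)⁻¹ * (-1 : Matrix (Fin 2) (Fin 2) ℂ) 1 0, (-1:ℂ)⁻¹ * (-1 : Matrix (Fin 2) (Fin 2) ℂ) 1 1]
      : Matrix (Fin 4) (Fin 4) ℂ) = 1 := by
    funext i j
    fin_cases i <;> fin_cases j <;>
      simp [Matrix.one_apply, Matrix.neg_apply, Matrix.vecHead, Matrix.vecTail] <;> norm_num
  have hd : Matrix.diagonal ![(-1:ℂ), (-1:ℂ)⁻¹] = -1 := by
    funext i j; fin_cases i <;> fin_cases j <;> simp [Matrix.diagonal, Matrix.one_apply, Matrix.neg_apply] <;> norm_num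
  have hm : (-1 : Matrix (Fin 3) (Fin 3) ℂ).map (starRingEnd ℂ) = -1 := by
    funext i j; simp [Matrix.map_apply, Matrix.one_apply, apply_ite]
  have hkr : (-1 : Matrix (Fin 2) (Fin 2) ℂ) ⊗ₖ (-1 : Matrix (Fin 3) (Fin 3) ℂ) = 1 := by
    have h1 : (-1 : Matrix (Fin 2) (Fin 2) ℂ) = (-1 : ℂ) • 1 := by simp
    have h2 : (-1 : Matrix (Fin 3) (Fin 3) ℂ) = (-1 : ℂ) • 1 := by simp
    rw [h1, h2, Matrix.smul_kronecker, Matrix.kronecker_smul, Matrix.one_kronecker_one,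
      smul_smul]
    norm_num
  rw [hT, hd, hm, hkr, Matrix.fromBlocks_one, Matrix.fromBlocks_one]

lemma rhoSM_eq_one_iff (l : Circle) (q : Matrix (Fin 2) (Fin 2) ℂ)
    (b : Matrix (Fin 3) (Fin 3) ℂ) :
    rhoSM l q b = 1 ↔
      (((l : ℂ) = 1 ∧ q = 1 ∧ b = 1) ∨ ((l : ℂ) = -1 ∧ q = -1 ∧ b = -1)) := by
  constructor
  · exact rhoSM_eq_one_forward l q b
  · rintro (⟨hl, hq, hb⟩ | ⟨hl, hq, hb⟩)
    · exact rhoSM_one_of l q b hl hq hb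
    · exact rhoSM_one_of_neg l q b hl hq hb

noncomputable def rhoSMHom : (Circle × Matrix.specialUnitaryGroup (Fin 2) ℂ ×
    Matrix.unitaryGroup (Fin 3) ℂ) →*
    Matrix (Fin 4 ⊕ ((Fin 2 × Fin 3) ⊕ (Fin 2 × Fin 3)))
      (Fin 4 ⊕ ((Fin 2 × Fin 3) ⊕ (Fin 2 × Fin 3))) ℂ where
  toFun x := rhoSM x.1 x.2.1 x.2.2
  map_one' := by
    refine rhoSM_one_of 1 _ _ ?_ ?_ ?_ <;> simp
  map_mul' := by
    rintro ⟨l₁, q₁, b₁⟩ ⟨l₂, q₂, b₂⟩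
    show rhoSM (l₁ * l₂) (↑(q₁ * q₂)) (↑(b₁ * b₂)) = _
    have h1 : ((q₁ * q₂ : Matrix.specialUnitaryGroup (Fin 2) ℂ) :
        Matrix (Fin 2) (Fin 2) ℂ) = (q₁ : Matrix (Fin 2) (Fin 2) ℂ) * q₂ := rfl
    have h2 : ((b₁ * b₂ : Matrix.unitaryGroup (Fin 3) ℂ) :
        Matrix (Fin 3) (Fin 3) ℂ) = (b₁ : Matrix (Fin 3) (Fin 3) ℂ) * b₂ := rfl
    rw [h1, h2, rhoSM_mul]

/-- The kernel of the Standard Model representation is `ℤ₂`: the map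
`ρ : Circle × SU(2,ℂ) × U(3,ℂ) → GL(ℂ¹⁶)` given by
`ρ(λ, q, b) = [diag(1, λ⁻²) ⊕ λ⁻¹·q] ⊕ [diag(λ, λ⁻¹) ⊗ conj(b)] ⊕ [q ⊗ conj(b)]`
is a group homomorphism whose kernel is exactly `{(1,1,1), (−1,−1,−1)} ≃ ℤ/2ℤ`.
Consequently the gauge group of the Standard Model finite space is
`(U(1) × SU(2) × U(3))/ℤ₂`. -/
theorem gauge_group_SM :
    ∃ ρ : (Circle × Matrix.specialUnitaryGroup (Fin 2) ℂ ×
        Matrix.unitaryGroup (Fin 3) ℂ) →*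
        Matrix (Fin 4 ⊕ ((Fin 2 × Fin 3) ⊕ (Fin 2 × Fin 3)))
          (Fin 4 ⊕ ((Fin 2 × Fin 3) ⊕ (Fin 2 × Fin 3))) ℂ,
      (∀ (l : Circle) (q : Matrix.specialUnitaryGroup (Fin 2) ℂ)
          (b : Matrix.unitaryGroup (Fin 3) ℂ),
        ρ (l, q, b) = rhoSM l (q : Matrix (Fin 2) (Fin 2) ℂ)
          (b : Matrix (Fin 3) (Fin 3) ℂ)) ∧
      (∀ (l : Circle) (q : Matrix.specialUnitaryGroup (Fin 2) ℂ)
          (b : Matrix.unitaryGroup (Fin 3) ℂ),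
        ρ (l, q, b) = 1 ↔
          (((l : ℂ) = 1 ∧ (q : Matrix (Fin 2) (Fin 2) ℂ) = 1 ∧
              (b : Matrix (Fin 3) (Fin 3) ℂ) = 1) ∨
           ((l : ℂ) = -1 ∧ (q : Matrix (Fin 2) (Fin 2) ℂ) = -1 ∧
              (b : Matrix (Fin 3) (Fin 3) ℂ) = -1))) := by
  refine ⟨rhoSMHom, fun l q b => rfl, fun l q b => ?_⟩
  show rhoSM l (q : Matrix (Fin 2) (Fin 2) ℂ) (b : Matrix (Fin 3) (Fin 3) ℂ) = 1 ↔ _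
  exact rhoSM_eq_one_iff l _ _
end

section
/- Unimodularity condition for the Standard Model: for the representation ρ(λ, q, b) = [diag(1, λ⁻²) ⊕ λ⁻¹·q] ⊕ [diag(λ, λ⁻¹) ⊗ conj(b)] ⊕ [q ⊗ conj(b)] on ℂ¹⁶ (one generation), the determinant equals det(ρ(λ, q, b)) = conj(λ · det b)⁴. Consequently, for the three-generation representation ρ ⊗ 1 on ℂ¹⁶ ⊗ ℂ³ one has det = conj(λ · det b)¹², and the unimodularity condition det(ρ(λ, q, b) ⊗ 1) = 1 holds if and only if (λ · det b)¹² = 1. -/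
open Kronecker

lemma det_fromBlocks_diag {m n : Type*} [Fintype m] [Fintype n] [DecidableEq m] [DecidableEq n]
    (A : Matrix m m ℂ) (D : Matrix n n ℂ) :
    (Matrix.fromBlocks A 0 0 D).det = A.det * D.det := by
  convert Matrix.det_fromBlocks_zero₂₁ A 0 D using 2

lemma det_aux (a c d e f : ℂ) :
    (!![1, 0, 0, 0; 0, a, 0, 0; 0, 0, c, d; 0, 0, e, f] : Matrix (Fin 4) (Fin 4) ℂ).det
      = a * (c * f - d * e) := by
  simp [Matrix.det_succ_row_zero, Fin.sum_univ_succ]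
  tauto

/-- Unimodularity condition for the Standard Model: for the one-generation
representation `ρ(λ, q, b)` on `ℂ¹⁶` one has `det(ρ(λ, q, b)) = conj(λ·det b)⁴`;
for the three-generation representation `ρ ⊗ 1` on `ℂ¹⁶ ⊗ ℂ³` one has
`det = conj(λ·det b)¹²`, and the unimodularity condition `det(ρ(λ,q,b) ⊗ 1) = 1`
holds if and only if `(λ·det b)¹² = 1`. -/
theorem unimodularity_SM
    (l : Circle) (q : Matrix.specialUnitaryGroup (Fin 2) ℂ)
    (b : Matrix.unitaryGroup (Fin 3) ℂ) :
    (rhoSM l (q : Matrix (Fin 2) (Fin 2) ℂ) (b : Matrix (Fin 3) (Fin 3) ℂ)).det =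
      starRingEnd ℂ ((l : ℂ) * (b : Matrix (Fin 3) (Fin 3) ℂ).det) ^ 4 ∧
    (rhoSM l (q : Matrix (Fin 2) (Fin 2) ℂ) (b : Matrix (Fin 3) (Fin 3) ℂ) ⊗ₖ
        (1 : Matrix (Fin 3) (Fin 3) ℂ)).det =
      starRingEnd ℂ ((l : ℂ) * (b : Matrix (Fin 3) (Fin 3) ℂ).det) ^ 12 ∧
    ((rhoSM l (q : Matrix (Fin 2) (Fin 2) ℂ) (b : Matrix (Fin 3) (Fin 3) ℂ) ⊗ₖ
        (1 : Matrix (Fin 3) (Fin 3) ℂ)).det = 1 ↔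
      ((l : ℂ) * (b : Matrix (Fin 3) (Fin 3) ℂ).det) ^ 12 = 1) := by
  have hq : (q : Matrix (Fin 2) (Fin 2) ℂ).det = 1 :=
    ((Matrix.mem_specialUnitaryGroup_iff).mp q.2).2
  have hlinv : (l : ℂ)⁻¹ = starRingEnd ℂ (l : ℂ) := by
    rw [← Circle.coe_inv, Circle.coe_inv_eq_conj]
  have hl : (l : ℂ) * starRingEnd ℂ (l : ℂ) = 1 := by
    rw [← hlinv]; exact mul_inv_cancel₀ (Circle.coe_ne_zero l)
  have hbmap : ((b : Matrix (Fin 3) (Fin 3) ℂ).map (starRingEnd ℂ)).det =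
      starRingEnd ℂ (b : Matrix (Fin 3) (Fin 3) ℂ).det :=
    ((starRingEnd ℂ).map_det _).symm
  have hdq := Matrix.det_fin_two (q : Matrix (Fin 2) (Fin 2) ℂ)
  rw [hq] at hdq
  have h1 : (rhoSM l (q : Matrix (Fin 2) (Fin 2) ℂ) (b : Matrix (Fin 3) (Fin 3) ℂ)).det =
      starRingEnd ℂ ((l : ℂ) * (b : Matrix (Fin 3) (Fin 3) ℂ).det) ^ 4 := by
    rw [rhoSM, det_fromBlocks_diag, det_fromBlocks_diag,
      Matrix.det_kronecker, Matrix.det_kronecker, hbmap, hq, Matrix.det_diagonal, det_aux,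
      hlinv, map_mul]
    simp only [Fin.prod_univ_two, Matrix.cons_val_zero, Matrix.cons_val_one, Matrix.head_cons,
      Fintype.card_fin, one_pow, hlinv]
    rw [hl]
    linear_combination ((starRingEnd ℂ) (l:ℂ))^4 * ((starRingEnd ℂ) (b : Matrix (Fin 3) (Fin 3) ℂ).det)^4 * hdq.symm
  have h2 : (rhoSM l (q : Matrix (Fin 2) (Fin 2) ℂ) (b : Matrix (Fin 3) (Fin 3) ℂ) ⊗ₖ
        (1 : Matrix (Fin 3) (Fin 3) ℂ)).det =
      starRingEnd ℂ ((l : ℂ) * (b : Matrix (Fin 3) (Fin 3) ℂ).det) ^ 12 := by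
    rw [Matrix.det_kronecker, h1, Matrix.det_one]
    simp [← pow_mul]
  refine ⟨h1, h2, ?_⟩
  rw [h2, ← map_pow, ← map_one (starRingEnd ℂ)]
  exact ⟨fun h => by simpa using (starRingEnd ℂ).injective h, fun h => by rw [h]; simp⟩
end

section
/- Higgs field from inner fluctuations of the electro-weak mass matrix: fix m_ν, m_e ∈ ℝ and let D_F ∈ M₄(ℂ) have nonzero entries (D_F)₀₂ = −i·m_ν, (D_F)₁₃ = −i·m_e, (D_F)₂₀ = i·m_ν, (D_F)₃₁ = i·m_e. For λ, α, β ∈ ℂ let π(λ, α, β) ∈ M₄(ℂ) be the block-diagonal matrix diag(λ, conj(λ), Q) with Q = [[α, β], [−conj(β), conj(α)]]. Then for any finite families (λ_j, α_j, β_j)_{j∈s} and (λ'_j, α'_j, β'_j)_{j∈s} of complex triples, the matrix Σ_{j∈s} π(λ_j, α_j, β_j)·(i·D_F·π(λ'_j, α'_j, β'_j) − π(λ'_j, α'_j, β'_j)·i·D_F) equals the 4×4 matrix φ whose only nonzero entries are φ₀₂ = m_ν·φ₁', φ₀₃ = m_ν·φ₂', φ₁₂ = −m_e·conj(φ₂'),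 φ₁₃ = m_e·conj(φ₁'), φ₂₀ = −m_ν·φ₁, φ₂₁ = m_e·conj(φ₂), φ₃₀ = −m_ν·φ₂, φ₃₁ = −m_e·conj(φ₁), where φ₁ = Σ_j [α_j(λ'_j − α'_j) + β_j·conj(β'_j)], φ₂ = Σ_j [conj(α_j)·conj(β'_j) − conj(β_j)(λ'_j − α'_j)], φ₁' = Σ_j λ_j(α'_j − λ'_j), and φ₂' = Σ_j λ_j·β'_j. -/
open scoped ComplexConjugate

/-- The electro-weak representation of `(λ, α, β) ∈ ℂ ⊕ ℍ` on `ℂ⁴`: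
`π(λ, α, β) = diag(λ, conj λ) ⊕ [[α, β], [−conj β, conj α]]`. -/
noncomputable def piEW (l a b : ℂ) : Matrix (Fin 4) (Fin 4) ℂ :=
  !![l, 0, 0, 0;
     0, conj l, 0, 0;
     0, 0, a, b;
     0, 0, -conj b, conj a]

/-- The electro-weak mass matrix `D_F` with neutrino mass `m_ν` and electron
mass `m_e`. -/
noncomputable def DF_EW (mnu me : ℝ) : Matrix (Fin 4) (Fin 4) ℂ :=
  !![0, 0, -Complex.I * mnu, 0;
     0, 0, 0, -Complex.I * me;
     Complex.I * mnu, 0, 0, 0;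
     0, Complex.I * me, 0, 0]

set_option maxHeartbeats 2000000 in
lemma summand (mnu me : ℝ) (l a b l' a' b' : ℂ) :
    piEW l a b * (Complex.I • DF_EW mnu me * piEW l' a' b' -
      piEW l' a' b' * (Complex.I • DF_EW mnu me)) =
    !![0, 0, (mnu:ℂ) * (l * (a' - l')), (mnu:ℂ) * (l * b');
       0, 0, -(me:ℂ) * conj (l * b'), (me:ℂ) * conj (l * (a' - l'));
       -(mnu:ℂ) * (a * (l' - a') + b * conj b'),
         (me:ℂ) * conj (conj a * conj b' - conj b * (l' - a')), 0, 0;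
       -(mnu:ℂ) * (conj a * conj b' - conj b * (l' - a')),
         -(me:ℂ) * conj (a * (l' - a') + b * conj b'), 0, 0] := by
  ext i j
  fin_cases i <;> fin_cases j
  all_goals simp only [piEW, DF_EW, Matrix.mul_apply, Matrix.sub_apply, Matrix.smul_apply,
        Fin.sum_univ_four, Matrix.cons_val', Matrix.cons_val_zero, Matrix.cons_val_one,
        Matrix.head_cons, Matrix.head_fin_const, Matrix.empty_val', Matrix.cons_val_fin_one,
        Matrix.cons_val_two, Matrix.cons_val_three, Matrix.tail_cons, Matrix.of_apply,
        smul_eq_mul, map_mul, map_sub, map_add, map_neg, Complex.conj_conj,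
        Fin.zero_eta, Fin.mk_one,
        show ((⟨2, by norm_num⟩ : Fin 4)) = 2 from rfl,
        show ((⟨3, by norm_num⟩ : Fin 4)) = 3 from rfl]
  all_goals ring_nf
  all_goals simp only [Complex.I_sq]
  all_goals ring_nf

set_option maxHeartbeats 2000000 in
/-- Higgs field from inner fluctuations of the electro-weak mass matrix: the finite part
`∑ⱼ π(aⱼ)·[i D_F, π(bⱼ)]` of the inner fluctuation equals the Higgs-field matrix `φ`
whose only nonzero entries are `φ₀₂ = m_ν φ₁'`, `φ₀₃ = m_ν φ₂'`,
`φ₁₂ = −m_e conj φ₂'`, `φ₁₃ = m_e conj φ₁'`, `φ₂₀ = −m_ν φ₁`, `φ₂₁ = m_e conj φ₂`,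
`φ₃₀ = −m_ν φ₂`, `φ₃₁ = −m_e conj φ₁`, where
`φ₁ = ∑ⱼ (αⱼ(λ'ⱼ − α'ⱼ) + βⱼ conj β'ⱼ)`,
`φ₂ = ∑ⱼ (conj αⱼ · conj β'ⱼ − conj βⱼ (λ'ⱼ − α'ⱼ))`,
`φ₁' = ∑ⱼ λⱼ(α'ⱼ − λ'ⱼ)` and `φ₂' = ∑ⱼ λⱼ β'ⱼ`. -/
theorem higgs_field_EW (mnu me : ℝ)
    {ι : Type*} [Fintype ι]
    (lam alp bet lam' alp' bet' : ι → ℂ)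
    (φ₁ φ₂ φ₁' φ₂' : ℂ)
    (h₁ : φ₁ = ∑ j : ι, (alp j * (lam' j - alp' j) + bet j * conj (bet' j)))
    (h₂ : φ₂ = ∑ j : ι, (conj (alp j) * conj (bet' j) - conj (bet j) * (lam' j - alp' j)))
    (h₁' : φ₁' = ∑ j : ι, lam j * (alp' j - lam' j))
    (h₂' : φ₂' = ∑ j : ι, lam j * bet' j) :
    (∑ j : ι, piEW (lam j) (alp j) (bet j) *
        (Complex.I • DF_EW mnu me * piEW (lam' j) (alp' j) (bet' j) -
         piEW (lam' j) (alp' j) (bet' j) * (Complex.I • DF_EW mnu me))) =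
      !![0, 0, (mnu : ℂ) * φ₁', (mnu : ℂ) * φ₂';
         0, 0, -(me : ℂ) * conj φ₂', (me : ℂ) * conj φ₁';
         -(mnu : ℂ) * φ₁, (me : ℂ) * conj φ₂, 0, 0;
         -(mnu : ℂ) * φ₂, -(me : ℂ) * conj φ₁, 0, 0] := by

  subst h₁ h₂ h₁' h₂'
  simp only [summand]
  ext i j
  rw [Matrix.sum_apply]
  fin_cases i <;> fin_cases j <;>
    simp [Fin.zero_eta, Fin.mk_one,
      show ((⟨2, by norm_num⟩ : Fin 4)) = 2 from rfl,
      show ((⟨3, by norm_num⟩ : Fin 4)) = 3 from rfl,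
      Finset.mul_sum, map_sum, neg_mul, Finset.sum_neg_distrib,
      Finset.sum_sub_distrib, Matrix.vecHead, Matrix.vecTail, mul_sub, mul_add, Finset.sum_add_distrib]
end

section
/- Majorana mass relations: let D_F, D_M ∈ M₄(ℂ) with D_F Hermitian (D_F† = D_F) and D_M symmetric (D_Mᵀ = D_M). Define the linear operator D̂ on ℂ⁴ ⊕ ℂ⁴ by D̂(x, y) = (D_F·x − D_M†·y, D_M·x + conj(D_F)·y), and the conjugate-linear operator Ĵ by Ĵ(x, y) = (conj(y), conj(x)) (entrywise complex conjugation). Then: (1) D̂ ∘ Ĵ = Ĵ ∘ D̂†, where D̂† is the Hilbert-space adjoint of D̂, given by D̂†(x, y) = (D_F·x + D_M†·y, −D_M·x + D_Fᵀ·y); and (2) the commutator satisfies (D̂ ∘ Ĵ − Ĵ ∘ D̂)(x, y) = (−2·conj(D_M)·conj(x), 2·D_M·conj(y)). -/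
open scoped ComplexConjugate
open Matrix

/-- The doubled mass operator `D̂` on `ℂ⁴ ⊕ ℂ⁴`:
`D̂(x, y) = (D_F·x − D_M†·y, D_M·x + conj(D_F)·y)`. -/
noncomputable def Dhat (DF DM : Matrix (Fin 4) (Fin 4) ℂ) :
    ((Fin 4 → ℂ) × (Fin 4 → ℂ)) → ((Fin 4 → ℂ) × (Fin 4 → ℂ)) :=
  fun p => (DF.mulVec p.1 - DMᴴ.mulVec p.2,
            DM.mulVec p.1 + (DF.map (starRingEnd ℂ)).mulVec p.2)

/-- The real structure `Ĵ(x, y) = (conj y, conj x)`. -/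
noncomputable def Jhat :
    ((Fin 4 → ℂ) × (Fin 4 → ℂ)) → ((Fin 4 → ℂ) × (Fin 4 → ℂ)) :=
  fun p => (fun i => conj (p.2 i), fun i => conj (p.1 i))

/-- The adjoint `D̂†(x, y) = (D_F·x + D_M†·y, −D_M·x + D_Fᵀ·y)`. -/
noncomputable def Dhatdag (DF DM : Matrix (Fin 4) (Fin 4) ℂ) :
    ((Fin 4 → ℂ) × (Fin 4 → ℂ)) → ((Fin 4 → ℂ) × (Fin 4 → ℂ)) :=
  fun p => (DF.mulVec p.1 + DMᴴ.mulVec p.2,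
            -(DM.mulVec p.1) + DFᵀ.mulVec p.2)

/-- Majorana mass relations: let `D_F, D_M ∈ M₄(ℂ)` with `D_F` Hermitian and `D_M`
symmetric.  Then (0) `D̂†` as given is the Hilbert-space adjoint of `D̂`;
(1) `D̂ ∘ Ĵ = Ĵ ∘ D̂†`; and (2) the commutator satisfies
`(D̂ ∘ Ĵ − Ĵ ∘ D̂)(x, y) = (−2·conj(D_M)·conj(x), 2·D_M·conj(y))`. -/
theorem majorana_mass_relations
    (DF DM : Matrix (Fin 4) (Fin 4) ℂ)
    (hDF : DF.IsHermitian) (hDM : DM.IsSymm) :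
    (∀ p q : (Fin 4 → ℂ) × (Fin 4 → ℂ),
      (∑ i, conj ((Dhat DF DM p).1 i) * q.1 i) +
        (∑ i, conj ((Dhat DF DM p).2 i) * q.2 i) =
      (∑ i, conj (p.1 i) * (Dhatdag DF DM q).1 i) +
        (∑ i, conj (p.2 i) * (Dhatdag DF DM q).2 i)) ∧
    (∀ p : (Fin 4 → ℂ) × (Fin 4 → ℂ),
      Dhat DF DM (Jhat p) = Jhat (Dhatdag DF DM p)) ∧
    (∀ p : (Fin 4 → ℂ) × (Fin 4 → ℂ),
      Dhat DF DM (Jhat p) - Jhat (Dhat DF DM p) =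
        ((-2 : ℂ) • (DM.map (starRingEnd ℂ)).mulVec (fun i => conj (p.1 i)),
         (2 : ℂ) • DM.mulVec (fun i => conj (p.2 i)))) := by
  have hF : ∀ i j, (starRingEnd ℂ) (DF j i) = DF i j := fun i j => by
    simpa [Matrix.conjTranspose_apply] using congrFun (congrFun hDF i) j
  have hM : ∀ i j, DM j i = DM i j := fun i j => by
    simpa [Matrix.transpose_apply] using congrFun (congrFun hDM i) j
  have hC : DF.map (starRingEnd ℂ) = DFᵀ := by
    ext i j; simp [Matrix.transpose_apply, Matrix.map_apply, hF j i]
  have hA : DMᴴ = DM.map (starRingEnd ℂ) := by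
    ext i j; simp [Matrix.conjTranspose_apply, Matrix.map_apply, hM i j]
  have hD : DFᵀᴴ = DFᵀ := by
    ext i j; simp [Matrix.conjTranspose_apply, Matrix.transpose_apply, hF j i]
  have hE : DFᵀ.map (starRingEnd ℂ) = DF := by
    ext i j; simp [Matrix.map_apply, Matrix.transpose_apply, hF i j]
  have hMM : (DM.map (starRingEnd ℂ)).map (starRingEnd ℂ) = DM := by
    ext i j; simp [Matrix.map_apply]
  have key2 : ∀ (M : Matrix (Fin 4) (Fin 4) ℂ) (v : Fin 4 → ℂ),
      (fun i => conj ((M *ᵥ v) i)) = (M.map (starRingEnd ℂ)) *ᵥ (fun i => conj (v i)) := by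
    intro M v; funext i; simp [Matrix.mulVec, dotProduct, Matrix.map_apply]
  refine ⟨?_, ?_, ?_⟩
  · intro p q
    have key : ∀ (f g : Fin 4 → ℂ), (∑ i, conj (f i) * g i) = star f ⬝ᵥ g := fun f g => rfl
    simp only [Dhat, Dhatdag, key, star_sub, star_add, star_neg, Matrix.star_mulVec,
      sub_dotProduct, add_dotProduct, neg_dotProduct,
      ← Matrix.dotProduct_mulVec, hDF.eq, Matrix.conjTranspose_conjTranspose, hC, hD,
      dotProduct_add, dotProduct_sub,
      dotProduct_neg, Matrix.mulVec_add, Matrix.mulVec_neg]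
    ring
  · intro p
    simp only [Dhat, Dhatdag, Jhat]
    have e1 : (fun i => conj ((-(DM *ᵥ p.1) + DFᵀ *ᵥ p.2) i)) =
        -((fun i => conj ((DM *ᵥ p.1) i))) + (fun i => conj ((DFᵀ *ᵥ p.2) i)) := by
      funext i; simp
    have e2 : (fun i => conj ((DF *ᵥ p.1 + DMᴴ *ᵥ p.2) i)) =
        (fun i => conj ((DF *ᵥ p.1) i)) + (fun i => conj ((DMᴴ *ᵥ p.2) i)) := by
      funext i; simp
    refine Prod.ext ?_ ?_
    · show _ = (fun i => conj ((-(DM *ᵥ p.1) + DFᵀ *ᵥ p.2) i))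
      rw [e1, key2 DM p.1, key2 DFᵀ p.2, hE, hA]
      exact sub_eq_neg_add _ _
    · show _ = (fun i => conj ((DF *ᵥ p.1 + DMᴴ *ᵥ p.2) i))
      rw [e2, key2 DF p.1, key2 DMᴴ p.2, hA, hMM, add_comm]
  · intro p
    simp only [Dhat, Jhat]
    have e3 : (fun i => conj ((DM *ᵥ p.1 + (DF.map (starRingEnd ℂ)) *ᵥ p.2) i)) =
        (fun i => conj ((DM *ᵥ p.1) i)) + (fun i => conj (((DF.map (starRingEnd ℂ)) *ᵥ p.2) i)) := by
      funext i; simp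
    have e4 : (fun i => conj ((DF *ᵥ p.1 - DMᴴ *ᵥ p.2) i)) =
        (fun i => conj ((DF *ᵥ p.1) i)) - (fun i => conj ((DMᴴ *ᵥ p.2) i)) := by
      funext i; simp [sub_eq_add_neg]
    refine Prod.ext ?_ ?_
    · show DF *ᵥ (fun i => conj (p.2 i)) - DMᴴ *ᵥ (fun i => conj (p.1 i)) -
        (fun i => conj ((DM *ᵥ p.1 + (DF.map (starRingEnd ℂ)) *ᵥ p.2) i)) = _
      rw [e3, key2 DM p.1, key2 (DF.map (starRingEnd ℂ)) p.2, hC, hE, hA]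
      funext i
      simp only [Pi.sub_apply, Pi.add_apply, Pi.smul_apply, smul_eq_mul]
      ring
    · show DM *ᵥ (fun i => conj (p.2 i)) + (DF.map (starRingEnd ℂ)) *ᵥ (fun i => conj (p.1 i)) -
        (fun i => conj ((DF *ᵥ p.1 - DMᴴ *ᵥ p.2) i)) = _
      rw [e4, key2 DF p.1, key2 DMᴴ p.2, hA, hMM]
      funext i
      simp only [Pi.sub_apply, Pi.add_apply, Pi.smul_apply, smul_eq_mul]
      ring
end
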